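/- The one-parameter family of matrices satisfies the relation: if [r/s]^*_q denotes the right (* = ♯) or left (* = ♭) q-deformation of the positive rational r/s, then the corresponding q-deformation of -r/s defined via the negated word t_{1,q}^{-a_1} t_{2,q}^{a_2} ⋯ t_{1,q}^{-a_{2m-1}} t_{2,q}^{a_{2m}} satisfies [-r/s]^*_q = -q^{-1} · [r/s]^*_{q^{-1}}. -/

import Mathlib

noncomputable section

def cfVal : List ℤ → ℚ
  | [] => 0
  | a :: t => a + (cfVal t)⁻¹

def pairsToList (L : List (ℕ × ℕ)) : List ℤ :=
  L.flatMap fun p => [(p.1 : ℤ), (p.2 : ℤ)]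

def IsCFE (L : List (ℕ × ℕ)) (x : ℚ) : Prop :=
  L ≠ [] ∧ (∀ p ∈ L, 1 ≤ p.2) ∧ (∀ p ∈ L.tail, 1 ≤ p.1) ∧
    cfVal (pairsToList L) = x

def t1q {K : Type*} [Field K] (q : K) : Matrix (Fin 2) (Fin 2) K := !![q, 1; 0, 1]
def t2q {K : Type*} [Field K] (q : K) : Matrix (Fin 2) (Fin 2) K := !![1, 0; -q, q]
def t1qInv {K : Type*} [Field K] (q : K) : Matrix (Fin 2) (Fin 2) K := !![q⁻¹, -q⁻¹; 0, 1]
def t2qInv {K : Type*} [Field K] (q : K) : Matrix (Fin 2) (Fin 2) K := !![1, 0; 1, q⁻¹]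

def qWord {K : Type*} [Field K] (q : K) : List (ℕ × ℕ) → Matrix (Fin 2) (Fin 2) K
  | [] => 1
  | (a, b) :: rest => t1q q ^ a * t2qInv q ^ b * qWord q rest

def qWordNeg {K : Type*} [Field K] (q : K) : List (ℕ × ℕ) → Matrix (Fin 2) (Fin 2) K
  | [] => 1
  | (a, b) :: rest => t1qInv q ^ a * t2q q ^ b * qWordNeg q rest

def qSharpK {K : Type*} [Field K] (q : K) (a : ℕ) : K := ∑ i ∈ Finset.range a, q ^ i

def qFlatK {K : Type*} [Field K] (q : K) (a : ℕ) : K :=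
  (∑ i ∈ Finset.range (a - 1), q ^ i) + q ^ a

def rightCF {K : Type*} [Field K] (q : K) : List (ℕ × ℕ) → K
  | [] => 0
  | (a, b) :: rest =>
      qSharpK q a + q ^ a / (qSharpK q⁻¹ b + (q⁻¹) ^ b / rightCF q rest)

def leftCF {K : Type*} [Field K] (q : K) : List (ℕ × ℕ) → K
  | [] => 0
  | [(a, b)] => qSharpK q a + q ^ a / qFlatK q⁻¹ b
  | (a, b) :: rest =>
      qSharpK q a + q ^ a / (qSharpK q⁻¹ b + (q⁻¹) ^ b / leftCF q rest)

def FareyDecomp (p q u v : ℕ) : Prop :=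
  Nat.Coprime p q ∧ Nat.Coprime u v ∧ u * q = p * v + 1

def AssocInt (r s l : ℕ) : Prop :=
  ∃ (L : List (ℕ × ℕ)) (a b : ℕ),
    IsCFE L ((r : ℚ) / s) ∧ L.getLast? = some (a, b) ∧
    l = if 2 ≤ b then 0 else a

def bumpLast : List (ℕ × ℕ) → List (ℕ × ℕ)
  | [] => []
  | [(c, d)] => [(c, d + 1)]
  | x :: xs => x :: bumpLast xs

/-! Conjugation by `D = diag(1, -q)` gives `t1qInv q = D (t1q q⁻¹) D⁻¹` and
`t2q q = D (t2qInv q⁻¹) D⁻¹`, so the negated word at `q` is `D` times the positive word at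
`q⁻¹` times `D⁻¹`; the factor `-q` that `D` puts on the second coordinate produces `-q⁻¹`.
Each block `t1q ^ a * t2qInv ^ b` acts on slopes by
`x ↦ [a]_q + q ^ a / ([b]_{q⁻¹} + q ^ (-b) / x)`, the recursion defining `rightCF`
(starting vector `(1, 0)`) and `leftCF` (starting vector `(1, 1 - q)`). That no denominator
vanishes is seen after specializing `X` to a transcendental real `t ≥ 1`, where every entry
is positive. -/

open Matrix Polynomial

variable {K : Type*} [Field K]

def qBlock (q : K) (a b : ℕ) : Matrix (Fin 2) (Fin 2) K := t1q q ^ a * t2qInv q ^ b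

def cfStep (q : K) (a b : ℕ) (x : K) : K :=
  qSharpK q a + q ^ a / (qSharpK q⁻¹ b + q⁻¹ ^ b / x)

-- Iterates the action of the blocks on slopes `w 0 / w 1`; the slope `0` stands for `∞`
-- (vector `(1, 0)`), since `c / 0 = 0` makes `cfStep q a b 0 = [a]_q + q ^ a / [b]_{q⁻¹}`.
def cfFold (q x : K) : List (ℕ × ℕ) → K
  | [] => x
  | (a, b) :: L => cfStep q a b (cfFold q x L)

theorem qWord_cons (q : K) (a b : ℕ) (L : List (ℕ × ℕ)) :
    qWord q ((a, b) :: L) = qBlock q a b * qWord q L := rfl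

theorem t1q_pow (q : K) (a : ℕ) : t1q q ^ a = !![q ^ a, qSharpK q a; 0, 1] := by
  induction a with
  | zero => simp [qSharpK, one_fin_two]
  | succ n ih =>
    rw [pow_succ, ih, t1q, mul_fin_two]
    simp [qSharpK, Finset.sum_range_succ, pow_succ, add_comm]

theorem t2qInv_pow (q : K) (b : ℕ) : t2qInv q ^ b = !![1, 0; qSharpK q⁻¹ b, q⁻¹ ^ b] := by
  induction b with
  | zero => simp [qSharpK, one_fin_two]
  | succ n ih =>
    rw [pow_succ, ih, t2qInv, mul_fin_two]
    simp [qSharpK, Finset.sum_range_succ, pow_succ]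

theorem qBlock_eq (q : K) (a b : ℕ) :
    qBlock q a b = !![q ^ a + qSharpK q a * qSharpK q⁻¹ b, qSharpK q a * q⁻¹ ^ b;
      qSharpK q⁻¹ b, q⁻¹ ^ b] := by
  rw [qBlock, t1q_pow, t2qInv_pow, mul_fin_two]
  simp

theorem rightCF_eq_cfFold (q : K) (L : List (ℕ × ℕ)) : rightCF q L = cfFold q 0 L := by
  induction L with
  | nil => rfl
  | cons p L ih => rw [rightCF, cfFold, ih, cfStep]

theorem qFlatK_inv_eq (q : K) (hq : q ≠ 0) {b : ℕ} (hb : 1 ≤ b) :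
    qFlatK q⁻¹ b = qSharpK q⁻¹ b + q⁻¹ ^ b * (1 - q) := by
  obtain ⟨c, rfl⟩ := Nat.exists_eq_add_of_le' hb
  have hcancel : q⁻¹ ^ (c + 1) * q = q⁻¹ ^ c := by
    rw [pow_succ, mul_assoc, inv_mul_cancel₀ hq, mul_one]
  simp only [qFlatK, qSharpK, Nat.add_sub_cancel, Finset.sum_range_succ]
  linear_combination hcancel

theorem leftCF_eq_cfFold (q : K) (hq : q ≠ 0) :
    ∀ L : List (ℕ × ℕ), (∀ p ∈ L, 1 ≤ p.2) → L ≠ [] → leftCF q L = cfFold q (1 - q)⁻¹ L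
  | [], _, hL => absurd rfl hL
  | [(a, b)], hb, _ => by
    rw [leftCF, cfFold, cfFold, cfStep, qFlatK_inv_eq q hq (hb _ List.mem_cons_self),
      div_inv_eq_mul]
  | (a, b) :: p :: L, hb, _ => by
    rw [leftCF.eq_3 q a b (p :: L) (by simp), cfFold, cfStep,
      leftCF_eq_cfFold q hq (p :: L) (fun p hp => hb p (List.mem_cons_of_mem _ hp)) (by simp)]

def diagUnit (q : K) (hq : q ≠ 0) : (Matrix (Fin 2) (Fin 2) K)ˣ where
  val := !![1, 0; 0, -q]
  inv := !![1, 0; 0, -q⁻¹]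
  val_inv := by simp [one_fin_two, hq]
  inv_val := by simp [one_fin_two, hq]

theorem Units.conj_mul_conj {M : Type*} [Monoid M] (u : Mˣ) (x y : M) :
    u * x * ↑u⁻¹ * (u * y * ↑u⁻¹) = u * (x * y) * ↑u⁻¹ := by
  simp only [mul_assoc, Units.inv_mul_cancel_left]

theorem t1qInv_eq_conj (q : K) (hq : q ≠ 0) :
    t1qInv q = diagUnit q hq * t1q q⁻¹ * (↑(diagUnit q hq)⁻¹ : Matrix (Fin 2) (Fin 2) K) := by
  simp [diagUnit, t1qInv, t1q, hq]

theorem t2q_eq_conj (q : K) (hq : q ≠ 0) :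
    t2q q = diagUnit q hq * t2qInv q⁻¹ * (↑(diagUnit q hq)⁻¹ : Matrix (Fin 2) (Fin 2) K) := by
  simp [diagUnit, t2q, t2qInv, hq]

theorem qWordNeg_eq_conj (q : K) (hq : q ≠ 0) (L : List (ℕ × ℕ)) :
    qWordNeg q L =
      diagUnit q hq * qWord q⁻¹ L * (↑(diagUnit q hq)⁻¹ : Matrix (Fin 2) (Fin 2) K) := by
  induction L with
  | nil => simp [qWordNeg, qWord]
  | cons p L ih =>
    rw [qWordNeg, qWord, ih, t1qInv_eq_conj q hq, t2q_eq_conj q hq, Units.conj_pow,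
      Units.conj_pow, Units.conj_mul_conj, Units.conj_mul_conj]

theorem qWordNeg_mulVec (q : K) (hq : q ≠ 0) (L : List (ℕ × ℕ)) (x y : K) :
    qWordNeg q L *ᵥ ![x, y] =
      ![(qWord q⁻¹ L *ᵥ ![x, -q⁻¹ * y]) 0, -q * (qWord q⁻¹ L *ᵥ ![x, -q⁻¹ * y]) 1] := by
  rw [qWordNeg_eq_conj q hq, ← mulVec_mulVec, ← mulVec_mulVec]
  ext i
  fin_cases i <;> simp [diagUnit, mulVec, dotProduct, Fin.sum_univ_two]

section Map

variable {K' : Type*} [Field K'] (f : K →+* K')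

theorem map_qSharpK (q : K) (a : ℕ) : f (qSharpK q a) = qSharpK (f q) a := by
  simp [qSharpK]

theorem map_cfFold (q x : K) (L : List (ℕ × ℕ)) : f (cfFold q x L) = cfFold (f q) (f x) L := by
  induction L with
  | nil => rfl
  | cons p L ih => simp [cfFold, cfStep, map_qSharpK, ih]

theorem map_qWord (q : K) (L : List (ℕ × ℕ)) : (qWord q L).map f = qWord (f q) L := by
  induction L with
  | nil => simp [qWord]
  | cons p L ih =>
    have ht1 : (t1q q).map f = t1q (f q) := by
      ext i j; fin_cases i <;> fin_cases j <;> simp [t1q]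
    have ht2 : (t2qInv q).map f = t2qInv (f q) := by
      ext i j; fin_cases i <;> fin_cases j <;> simp [t2qInv]
    simp only [qWord, ← RingHom.mapMatrix_apply, map_mul, map_pow] at ih ⊢
    rw [ih, RingHom.mapMatrix_apply, RingHom.mapMatrix_apply, ht1, ht2]

end Map

section Ordered

variable {F : Type*} [Field F] [LinearOrder F] [IsStrictOrderedRing F] {q : F}

theorem qSharpK_nonneg (hq : 0 < q) (a : ℕ) : 0 ≤ qSharpK q a :=
  Finset.sum_nonneg fun i _ => (pow_pos hq i).le

theorem qSharpK_pos (hq : 0 < q) {a : ℕ} (ha : 1 ≤ a) : 0 < qSharpK q a :=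
  Finset.sum_pos (fun i _ => pow_pos hq i) ⟨0, Finset.mem_range.mpr ha⟩

theorem qBlock_mulVec (hq : 0 < q) (a : ℕ) {b : ℕ} (hb : 1 ≤ b) {w : Fin 2 → F}
    (hw0 : 0 < w 0) (hw1 : 0 ≤ w 1) :
    0 < (qBlock q a b *ᵥ w) 0 ∧ 0 < (qBlock q a b *ᵥ w) 1 ∧
      (qBlock q a b *ᵥ w) 0 / (qBlock q a b *ᵥ w) 1 = cfStep q a b (w 0 / w 1) := by
  have hS := qSharpK_nonneg hq a
  have hS' := qSharpK_pos (inv_pos.mpr hq) hb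
  have hqa := pow_pos hq a
  have hqb := pow_pos (inv_pos.mpr hq) b
  have hden : 0 < qSharpK q⁻¹ b * w 0 + q⁻¹ ^ b * w 1 := by positivity
  simp only [qBlock_eq, mulVec, dotProduct, Fin.sum_univ_two, of_apply, cons_val', cons_val_zero,
    cons_val_one, empty_val', cons_val_fin_one]
  refine ⟨by positivity, hden, ?_⟩
  rw [cfStep, div_div_eq_mul_div]
  generalize qSharpK q a = S, qSharpK q⁻¹ b = S', q⁻¹ ^ b = c, q ^ a = d at *
  field_simp
  ring

theorem qWord_mulVec (hq : 0 < q) {L : List (ℕ × ℕ)} (hb : ∀ p ∈ L, 1 ≤ p.2) {v : Fin 2 → F}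
    (hv0 : 0 < v 0) (hv1 : 0 ≤ v 1) :
    0 < (qWord q L *ᵥ v) 0 ∧ 0 ≤ (qWord q L *ᵥ v) 1 ∧
      (qWord q L *ᵥ v) 0 / (qWord q L *ᵥ v) 1 = cfFold q (v 0 / v 1) L := by
  induction L with
  | nil => simp [qWord, cfFold, hv0, hv1]
  | cons p L ih =>
    obtain ⟨a, b⟩ := p
    obtain ⟨hw0, hw1, hw⟩ := ih fun p hp => hb p (List.mem_cons_of_mem _ hp)
    obtain ⟨h0, h1, h⟩ := qBlock_mulVec hq a (hb _ List.mem_cons_self) hw0 hw1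
    rw [qWord_cons, ← mulVec_mulVec, cfFold, ← hw]
    exact ⟨h0, h1.le, h⟩

theorem qWord_mulVec_one_pos (hq : 0 < q) {L : List (ℕ × ℕ)} (hb : ∀ p ∈ L, 1 ≤ p.2)
    (hL : L ≠ []) {v : Fin 2 → F} (hv0 : 0 < v 0) (hv1 : 0 ≤ v 1) :
    0 < (qWord q L *ᵥ v) 1 := by
  obtain ⟨⟨a, b⟩, L, rfl⟩ := List.exists_cons_of_ne_nil hL
  obtain ⟨hw0, hw1, -⟩ := qWord_mulVec hq (fun p hp => hb p (List.mem_cons_of_mem _ hp)) hv0 hv1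
  rw [qWord_cons, ← mulVec_mulVec]
  exact (qBlock_mulVec hq a (hb _ List.mem_cons_self) hw0 hw1).2.1

end Ordered

section Specialization

variable {F : Type*} [Field F] [LinearOrder F] [IsStrictOrderedRing F] (f : K →+* F)

theorem qWord_mulVec_div_of_ringHom {q : K} (hq : 0 < f q) {L : List (ℕ × ℕ)}
    (hb : ∀ p ∈ L, 1 ≤ p.2) (hL : L ≠ []) {v : Fin 2 → K} (hv0 : 0 < f (v 0))
    (hv1 : 0 ≤ f (v 1)) :
    (qWord q L *ᵥ v) 1 ≠ 0 ∧
      (qWord q L *ᵥ v) 0 / (qWord q L *ᵥ v) 1 = cfFold q (v 0 / v 1) L := by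
  have hmap (i : Fin 2) : f ((qWord q L *ᵥ v) i) = (qWord (f q) L *ᵥ (f ∘ v)) i := by
    rw [RingHom.map_mulVec, map_qWord]
  refine ⟨fun h => (qWord_mulVec_one_pos hq hb hL (v := f ∘ v) hv0 hv1).ne' ?_, f.injective ?_⟩
  · rw [← hmap, h, map_zero]
  · rw [map_div₀, hmap, hmap, map_cfFold, map_div₀]
    exact (qWord_mulVec hq hb (v := f ∘ v) hv0 hv1).2.2

theorem qWordNeg_mulVec_div_of_ringHom {q : K} (hq : q ≠ 0) (hfq : 0 < f q⁻¹)
    {L : List (ℕ × ℕ)} (hb : ∀ p ∈ L, 1 ≤ p.2) (hL : L ≠ []) {x y : K} (hx : 0 < f x)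
    (hy : 0 ≤ f (-q⁻¹ * y)) :
    (qWordNeg q L *ᵥ ![x, y]) 1 ≠ 0 ∧
      (qWordNeg q L *ᵥ ![x, y]) 0 / (qWordNeg q L *ᵥ ![x, y]) 1 =
        -q⁻¹ * cfFold q⁻¹ (x / (-q⁻¹ * y)) L := by
  obtain ⟨hne, hdiv⟩ :=
    qWord_mulVec_div_of_ringHom f hfq hb hL (v := ![x, -q⁻¹ * y]) hx hy
  simp only [qWordNeg_mulVec q hq, cons_val_zero, cons_val_one] at hne hdiv ⊢
  refine ⟨mul_ne_zero (neg_ne_zero.mpr hq) hne, ?_⟩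
  rw [← hdiv]
  field_simp

end Specialization

theorem exists_ratFunc_ringHom_real : ∃ f : RatFunc ℚ →+* ℝ, 1 ≤ f RatFunc.X := by
  have hliou : Liouville (liouvilleNumber 2 + 1) := forall_liouvilleWith_iff.mp fun p => by
    simpa using ((liouville_liouvilleNumber le_rfl).liouvilleWith p).add_nat 1
  have htr : Transcendental ℚ (liouvilleNumber 2 + 1) := fun h =>
    hliou.transcendental ((IsFractionRing.isAlgebraic_iff ℤ ℚ ℝ).mpr h)
  refine ⟨RatFunc.liftRingHom (aeval (liouvilleNumber 2 + 1)).toRingHom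
    (nonZeroDivisors_le_comap_nonZeroDivisors_of_injective _
      (transcendental_iff_injective.mp htr)), ?_⟩
  simp only [RatFunc.liftRingHom_X, AlgHom.toRingHom_eq_coe, RingHom.coe_coe, aeval_X,
    le_add_iff_nonneg_left]
  exact tsum_nonneg fun i => by positivity

theorem stmt11_general (r s : ℕ)
    (L : List (ℕ × ℕ)) (hL : IsCFE L ((r : ℚ) / s)) :
    ((qWordNeg (RatFunc.X : RatFunc ℚ) L) 1 0 ≠ 0 ∧
      (qWordNeg (RatFunc.X : RatFunc ℚ) L) 0 0 /
          (qWordNeg (RatFunc.X : RatFunc ℚ) L) 1 0 =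
        -(RatFunc.X : RatFunc ℚ)⁻¹ * rightCF (RatFunc.X : RatFunc ℚ)⁻¹ L) ∧
    (((qWordNeg (RatFunc.X : RatFunc ℚ) L).mulVec ![1, 1 - RatFunc.X]) 1 ≠ 0 ∧
      ((qWordNeg (RatFunc.X : RatFunc ℚ) L).mulVec ![1, 1 - RatFunc.X]) 0 /
          ((qWordNeg (RatFunc.X : RatFunc ℚ) L).mulVec ![1, 1 - RatFunc.X]) 1 =
        -(RatFunc.X : RatFunc ℚ)⁻¹ * leftCF (RatFunc.X : RatFunc ℚ)⁻¹ L) := by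
  obtain ⟨hL, hb, -, -⟩ := hL
  obtain ⟨f, hfX⟩ := exists_ratFunc_ringHom_real
  have hX : (RatFunc.X : RatFunc ℚ) ≠ 0 := RatFunc.X_ne_zero
  have hfX' : 0 < f RatFunc.X⁻¹ := by rw [map_inv₀]; positivity
  have hcol (i : Fin 2) :
      qWordNeg (RatFunc.X : RatFunc ℚ) L i 0 = (qWordNeg RatFunc.X L *ᵥ ![1, 0]) i := by
    simp [mulVec, dotProduct]
  have hleft : -(RatFunc.X : RatFunc ℚ)⁻¹ * (1 - RatFunc.X) = 1 - RatFunc.X⁻¹ := by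
    field_simp; ring
  have hfleft : 0 ≤ f (1 - RatFunc.X⁻¹) := by
    rw [map_sub, map_one, map_inv₀]
    exact sub_nonneg.mpr (inv_le_one_of_one_le₀ hfX)
  simp only [hcol, rightCF_eq_cfFold, leftCF_eq_cfFold _ (inv_ne_zero hX) L hb hL]
  constructor
  · simpa using
      qWordNeg_mulVec_div_of_ringHom f hX hfX' hb hL (x := 1) (y := 0) (by simp) (by simp)
  · have h := qWordNeg_mulVec_div_of_ringHom f hX hfX' hb hL (x := 1) (y := 1 - RatFunc.X)
      (by simp) (by rwa [hleft])
    rwa [hleft, one_div] at h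

theorem stmt11 (r s : ℕ) (hr : 0 < r) (hs : 0 < s) (hco : Nat.Coprime r s)
    (L : List (ℕ × ℕ)) (hL : IsCFE L ((r : ℚ) / s)) :
    ((qWordNeg (RatFunc.X : RatFunc ℚ) L) 1 0 ≠ 0 ∧
      (qWordNeg (RatFunc.X : RatFunc ℚ) L) 0 0 /
          (qWordNeg (RatFunc.X : RatFunc ℚ) L) 1 0 =
        -(RatFunc.X : RatFunc ℚ)⁻¹ * rightCF (RatFunc.X : RatFunc ℚ)⁻¹ L) ∧
    (((qWordNeg (RatFunc.X : RatFunc ℚ) L).mulVec ![1, 1 - RatFunc.X]) 1 ≠ 0 ∧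
      ((qWordNeg (RatFunc.X : RatFunc ℚ) L).mulVec ![1, 1 - RatFunc.X]) 0 /
          ((qWordNeg (RatFunc.X : RatFunc ℚ) L).mulVec ![1, 1 - RatFunc.X]) 1 =
        -(RatFunc.X : RatFunc ℚ)⁻¹ * leftCF (RatFunc.X : RatFunc ℚ)⁻¹ L) :=
  stmt11_general r s L hL
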